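/- arXiv:1205.2895 — 6 statements merged into one kernel-verified Lean document; each statement's English description precedes it below -/
import Mathlib

section
/- There exists a constant c > 0 such that for all real numbers t1, t2 and every integer n ≥ 2, the sum over j from 1 to n of (t1 + j·t2)² is at least c·(n·t1² + n³·t2²). -/
open Finset

/-!
Completing the square around the mean `(n + 1) / 2` of `1, …, n` splits the sum into
`n (t1 + (n + 1) t2 / 2)² + n (n² - 1) / 12 · t2²`, and for `n ≥ 2` these two squares control
both `t1²` and `n² t2²`.
-/

theorem sum_Icc_add_mul_sq (a b : ℝ) (n : ℕ) :
    ∑ j ∈ Icc 1 n, (a + (j : ℝ) * b) ^ 2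
      = n * (a + (n + 1) / 2 * b) ^ 2 + n * (n ^ 2 - 1) / 12 * b ^ 2 := by
  induction n with
  | zero => simp
  | succ m ih =>
    rw [sum_Icc_succ_top (by omega), ih]
    push_cast
    ring

/- With `u = a + (x + 1) / 2 * b`, `a² ≤ 2u² + (x + 1)² b² / 2`; the constant `34` is the least one
for which the leftover `b²`-coefficient, `(x - 2)(8x + 10) / 6`, is nonnegative at `x = 2`. -/
theorem sq_add_sq_le_of_two_le (a b x : ℝ) (hx : 2 ≤ x) :
    a ^ 2 + x ^ 2 * b ^ 2 ≤ 34 * ((a + (x + 1) / 2 * b) ^ 2 + (x ^ 2 - 1) / 12 * b ^ 2) := by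
  have hslack : 0 ≤ (x - 2) * (8 * x + 10) * b ^ 2 := by
    have : 0 ≤ (x - 2) * (8 * x + 10) := mul_nonneg (by linarith) (by linarith)
    positivity
  nlinarith [sq_nonneg (a + (x + 1) * b), sq_nonneg (a + (x + 1) / 2 * b)]

/-- There exists `c > 0` such that for all reals `t1, t2` and every integer `n ≥ 2`,
`∑_{j=1}^n (t1 + j t2)^2 ≥ c (n t1^2 + n^3 t2^2)`. -/
theorem sum_sq_lower_bound :
    ∃ c : ℝ, 0 < c ∧ ∀ (t1 t2 : ℝ) (n : ℕ), 2 ≤ n →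
      c * ((n : ℝ) * t1 ^ 2 + (n : ℝ) ^ 3 * t2 ^ 2)
        ≤ ∑ j ∈ Finset.Icc 1 n, (t1 + (j : ℝ) * t2) ^ 2 := by
  refine ⟨1 / 34, by norm_num, fun t1 t2 n hn => ?_⟩
  have hbound := sq_add_sq_le_of_two_le t1 t2 n (by exact_mod_cast hn)
  calc 1 / 34 * ((n : ℝ) * t1 ^ 2 + (n : ℝ) ^ 3 * t2 ^ 2)
      = n / 34 * (t1 ^ 2 + (n : ℝ) ^ 2 * t2 ^ 2) := by ring
    _ ≤ n * ((t1 + (n + 1) / 2 * t2) ^ 2 + ((n : ℝ) ^ 2 - 1) / 12 * t2 ^ 2) := by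
        linarith [mul_le_mul_of_nonneg_left hbound (Nat.cast_nonneg (α := ℝ) n)]
    _ = ∑ j ∈ Icc 1 n, (t1 + (j : ℝ) * t2) ^ 2 := by rw [sum_Icc_add_mul_sq]; ring
end

section
/- For every 0 < ε < π/2 there exists h = h(ε) ∈ (0,1) such that for every integer n ≥ 4 and every (t1, t2) ∈ ℝ² with M(t1) + n·M(t2) ≥ ε (where M(x) = min_{k∈ℤ} |x − kπ| is the distance to the nearest multiple of π), one has |∏_{j=1}^n cos(t1 + j t2)| ≤ (1 − h)^n. -/
open Finset Real

/-! The distance `M x` from `x` to `πℤ` is the norm of `x` in `AddCircle π`, and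
`|cos x| = cos (M x)`. If `n M(t₂)` is small, every `M(t₁ + j t₂)` stays above `ε/2`, so each
factor is at most `cos (ε/2)`. Otherwise some `k ≤ n/2` has `M(k t₂) ≥ ε/16`; pairing the factor
`j` with the factor `j + k` and using `|cos a cos b| ≤ (1 + |cos (a - b)|)/2` bounds the square of
the product by `((1 + cos (ε/16))/2)^(n-k)`, hence the product by `((1 + cos (ε/16))/2)^(n/4)`. -/

theorem norm_sub_mul_norm_le_norm_add_nsmul {E : Type*} [SeminormedAddCommGroup E] (a b : E)
    (n : ℕ) : ‖a‖ - n * ‖b‖ ≤ ‖a + n • b‖ := by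
  have h := norm_sub_le (a + n • b) (n • b)
  have hnb : ‖n • b‖ ≤ n * ‖b‖ := norm_nsmul_le
  rw [add_sub_cancel_right] at h
  linarith

theorem sq_prod_Icc_le_pow_of_mul_shift_le {f : ℕ → ℝ} {c : ℝ} {n k : ℕ}
    (hf0 : ∀ j, 0 ≤ f j) (hf1 : ∀ j, f j ≤ 1) (hc : ∀ j, f j * f (j + k) ≤ c) (hk : k ≤ n) :
    (∏ j ∈ Icc 1 n, f j) ^ 2 ≤ c ^ (n - k) := by
  have hsub (s : Finset ℕ) (hs : s ⊆ Icc 1 n) : ∏ j ∈ Icc 1 n, f j ≤ ∏ j ∈ s, f j :=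
    prod_le_prod_of_subset_of_le_one hs (fun j _ => hf0 j) (fun j _ _ => hf1 j)
  have hshift : ∏ j ∈ Icc 1 (n - k), f (j + k) = ∏ j ∈ Icc (1 + k) n, f j := by
    rw [← Nat.sub_add_cancel hk, ← map_add_right_Icc, prod_map, Nat.sub_add_cancel hk]
    rfl
  calc (∏ j ∈ Icc 1 n, f j) ^ 2
      ≤ (∏ j ∈ Icc 1 (n - k), f j) * ∏ j ∈ Icc 1 (n - k), f (j + k) := by
        rw [sq, hshift]
        exact mul_le_mul (hsub _ (Icc_subset_Icc_right (Nat.sub_le n k)))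
          (hsub _ (Icc_subset_Icc_left (Nat.le_add_right 1 k))) (prod_nonneg fun j _ => hf0 j)
          (prod_nonneg fun j _ => hf0 j)
    _ = ∏ j ∈ Icc 1 (n - k), f j * f (j + k) := prod_mul_distrib.symm
    _ ≤ ∏ _j ∈ Icc 1 (n - k), c :=
        prod_le_prod (fun j _ => mul_nonneg (hf0 j) (hf0 _)) (fun j _ => hc j)
    _ = c ^ (n - k) := by rw [prod_const, Nat.card_Icc, Nat.add_sub_cancel]

theorem le_pow_of_sq_le_pow_four_pow_sub {P r : ℝ} {n k : ℕ} (hP : 0 ≤ P) (hr0 : 0 ≤ r)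
    (hr1 : r ≤ 1) (hk : 2 * k ≤ n) (h : P ^ 2 ≤ (r ^ 4) ^ (n - k)) : P ≤ r ^ n := by
  rw [← pow_le_pow_iff_left₀ hP (pow_nonneg hr0 n) two_ne_zero]
  calc P ^ 2 ≤ r ^ (4 * (n - k)) := by rwa [pow_mul]
    _ ≤ r ^ (n * 2) := pow_le_pow_of_le_one hr0 hr1 (by omega)
    _ = (r ^ n) ^ 2 := pow_mul r n 2

theorem exists_nat_two_mul_le_and_mul_mem_Icc {μ δ : ℝ} {n : ℕ} (hμ : 0 < μ) (hδ : 0 ≤ δ)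
    (hn : 4 ≤ n) (hδn : 4 * δ ≤ n * μ) : ∃ k : ℕ, 2 * k ≤ n ∧ k * μ ∈ Set.Icc δ (δ + μ) := by
  have hk := Nat.ceil_lt_add_one (div_nonneg hδ hμ.le)
  refine ⟨⌈δ / μ⌉₊, ?_, (div_le_iff₀ hμ).1 (Nat.le_ceil _), ?_⟩
  · have hδμ : δ / μ ≤ n / 4 := by
      rw [div_le_div_iff₀ hμ four_pos]; linarith
    have : (2 * ⌈δ / μ⌉₊ : ℝ) ≤ n := by
      have : (4 : ℝ) ≤ n := by exact_mod_cast hn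
      linarith
    exact_mod_cast this
  · have := mul_le_mul_of_nonneg_right hk.le hμ.le
    rwa [add_mul, div_mul_cancel₀ _ hμ.ne', one_mul] at this

theorem abs_cos_add_int_mul_pi (x : ℝ) (m : ℤ) : |cos (x + m * π)| = |cos x| := by
  rw [cos_add_int_mul_pi, abs_mul, abs_neg_one_zpow, one_mul]

theorem iInf_abs_sub_int_mul_eq_norm_addCircle (p x : ℝ) :
    ⨅ k : ℤ, |x - k * p| = ‖(x : AddCircle p)‖ := by
  refine le_antisymm ?_ (le_ciInf fun k => ?_)
  · rw [AddCircle.norm_eq]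
    exact ciInf_le ⟨0, by rintro _ ⟨k, rfl⟩; positivity⟩ _
  · calc ‖(x : AddCircle p)‖ = ‖((x - k * p : ℝ) : AddCircle p)‖ := by
          rw [← zsmul_eq_mul, AddCircle.coe_sub, AddCircle.coe_zsmul, AddCircle.coe_period,
            smul_zero, sub_zero]
      _ ≤ |x - k * p| := QuotientAddGroup.norm_mk_le_norm

theorem norm_addCircle_pi_le (x : AddCircle π) : ‖x‖ ≤ π / 2 := by
  simpa [abs_of_pos pi_pos] using AddCircle.norm_le_half_period π pi_ne_zero (x := x)

theorem abs_cos_eq_cos_norm_addCircle (x : ℝ) : |cos x| = cos ‖(x : AddCircle π)‖ := by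
  have hle := norm_addCircle_pi_le x
  rw [AddCircle.norm_eq] at hle ⊢
  set s := x - round (π⁻¹ * x) * π
  have hx : x = s + round (π⁻¹ * x) * π := by ring
  rw [hx, abs_cos_add_int_mul_pi, ← cos_abs s, abs_of_nonneg]
  exact cos_nonneg_of_neg_pi_div_two_le_of_le (by linarith [abs_nonneg s, pi_pos]) hle

theorem abs_cos_le_cos_of_le_abs {y δ : ℝ} (hδ : 0 ≤ δ) (hy : δ ≤ |y|) (hy' : |y| ≤ π - δ) :
    |cos y| ≤ cos δ := by
  rw [← cos_abs y, abs_le]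
  constructor
  · rw [neg_le, ← cos_pi_sub]
    exact cos_le_cos_of_nonneg_of_le_pi hδ (by linarith [abs_nonneg y]) (by linarith)
  · exact cos_le_cos_of_nonneg_of_le_pi hδ (by linarith) hy

theorem abs_cos_mul_cos_le (a b : ℝ) : |cos a * cos b| ≤ (1 + |cos (a - b)|) / 2 := by
  have hprod : cos a * cos b = (cos (a + b) + cos (a - b)) / 2 := by
    rw [cos_add, cos_sub]; ring
  rw [hprod, abs_div, abs_two]
  gcongr
  exact (abs_add_le _ _).trans (by gcongr; exact abs_cos_le_one _)

theorem prod_abs_cos_le_of_add_mul_norm_le {ε t1 t2 : ℝ} {n : ℕ} (hε : 0 ≤ ε)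
    (h : ε + n * ‖(t2 : AddCircle π)‖ ≤ ‖(t1 : AddCircle π)‖) :
    ∏ j ∈ Icc 1 n, |cos (t1 + j * t2)| ≤ cos ε ^ n := by
  calc ∏ j ∈ Icc 1 n, |cos (t1 + j * t2)| ≤ ∏ _j ∈ Icc 1 n, cos ε := by
        refine prod_le_prod (fun _ _ => abs_nonneg _) fun j hj => ?_
        have hj : (j : ℝ) ≤ n := by exact_mod_cast (mem_Icc.1 hj).2
        have hnorm : ε ≤ ‖((t1 + j * t2 : ℝ) : AddCircle π)‖ := by
          rw [← nsmul_eq_mul, AddCircle.coe_add, AddCircle.coe_nsmul]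
          have := norm_sub_mul_norm_le_norm_add_nsmul (t1 : AddCircle π) t2 j
          nlinarith [norm_nonneg (t2 : AddCircle π)]
        rw [abs_cos_eq_cos_norm_addCircle]
        exact cos_le_cos_of_nonneg_of_le_pi hε
          ((norm_addCircle_pi_le _).trans (by linarith [pi_pos])) hnorm
    _ = cos ε ^ n := by rw [prod_const, Nat.card_Icc, Nat.add_sub_cancel]

theorem prod_abs_cos_le_of_le_mul_norm {δ t1 t2 : ℝ} {n : ℕ} (hδ : 0 < δ) (hδπ : δ ≤ π / 4)
    (hn : 4 ≤ n) (h : 4 * δ ≤ n * ‖(t2 : AddCircle π)‖) :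
    ∏ j ∈ Icc 1 n, |cos (t1 + j * t2)| ≤ √√((1 + cos δ) / 2) ^ n := by
  set μ := ‖(t2 : AddCircle π)‖
  set s := t2 - round (π⁻¹ * t2) * π
  have hμs : μ = |s| := AddCircle.norm_eq π
  have hμ : 0 < μ := pos_of_mul_pos_right (by linarith) (Nat.cast_nonneg n)
  obtain ⟨k, h2k, hδk, hkδ⟩ := exists_nat_two_mul_le_and_mul_mem_Icc hμ hδ.le hn h
  have hcosk : |cos (k * t2)| ≤ cos δ := by
    have ht2 : (k : ℝ) * t2 = k * s + ((k * round (π⁻¹ * t2) : ℤ) : ℝ) * π := by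
      push_cast; ring
    have hks : |(k : ℝ) * s| = k * μ := by rw [abs_mul, Nat.abs_cast, hμs]
    rw [ht2, abs_cos_add_int_mul_pi]
    refine abs_cos_le_cos_of_le_abs hδ.le (hks ▸ hδk) ?_
    linarith [norm_addCircle_pi_le (t2 : AddCircle π)]
  have hpair (j : ℕ) : |cos (t1 + j * t2)| * |cos (t1 + ↑(j + k) * t2)| ≤ (1 + cos δ) / 2 := by
    rw [← abs_mul, mul_comm]
    refine (abs_cos_mul_cos_le _ _).trans ?_
    have : t1 + ↑(j + k) * t2 - (t1 + j * t2) = k * t2 := by push_cast; ring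
    rw [this]
    linarith
  have hsq := sq_prod_Icc_le_pow_of_mul_shift_le (n := n) (fun _ => abs_nonneg _)
    (fun _ => abs_cos_le_one _) hpair (by omega)
  have hc0 : 0 ≤ (1 + cos δ) / 2 := by linarith [neg_one_le_cos δ]
  have hr4 : √√((1 + cos δ) / 2) ^ 4 = (1 + cos δ) / 2 := by
    rw [show 4 = 2 * 2 from rfl, pow_mul, sq_sqrt (sqrt_nonneg _), sq_sqrt hc0]
  rw [← hr4] at hsq
  exact le_pow_of_sq_le_pow_four_pow_sub (prod_nonneg fun _ _ => abs_nonneg _) (sqrt_nonneg _)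
    (sqrt_le_one.2 (sqrt_le_one.2 (by linarith [cos_le_one δ]))) h2k hsq

/-- For every `0 < ε < π/2` there is `h = h(ε) ∈ (0,1)` such that for every integer
`n ≥ 4` and every `(t1,t2)` with `M(t1) + n M(t2) ≥ ε`, where `M(x)` is the distance
from `x` to the nearest multiple of `π`, one has
`|∏_{j=1}^n cos (t1 + j t2)| ≤ (1 - h)^n`. -/
theorem prod_cos_exponentially_small
    (M : ℝ → ℝ) (hM : ∀ x, M x = ⨅ k : ℤ, |x - (k : ℝ) * Real.pi|) :
    ∀ ε : ℝ, 0 < ε → ε < Real.pi / 2 →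
      ∃ h : ℝ, h ∈ Set.Ioo (0 : ℝ) 1 ∧
        ∀ (n : ℕ), 4 ≤ n → ∀ t1 t2 : ℝ, ε ≤ M t1 + (n : ℝ) * M t2 →
          |∏ j ∈ Finset.Icc 1 n, Real.cos (t1 + (j : ℝ) * t2)| ≤ (1 - h) ^ n := by
  obtain rfl : M = fun x : ℝ => ‖(x : AddCircle π)‖ :=
    funext fun x => (hM x).trans (iInf_abs_sub_int_mul_eq_norm_addCircle π x)
  intro ε hε hεπ
  have hq : cos (ε / 2) < 1 :=
    cos_zero ▸ cos_lt_cos_of_nonneg_of_le_pi le_rfl (by linarith) (by linarith)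
  have hq0 : 0 < cos (ε / 2) := cos_pos_of_mem_Ioo ⟨by linarith, by linarith⟩
  have hc : cos (ε / 16) < 1 :=
    cos_zero ▸ cos_lt_cos_of_nonneg_of_le_pi le_rfl (by linarith) (by linarith)
  set r := √√((1 + cos (ε / 16)) / 2)
  have hr : r < 1 := by
    rw [sqrt_lt' one_pos, one_pow, sqrt_lt' one_pos, one_pow]; linarith
  refine ⟨1 - max (cos (ε / 2)) r, ⟨by simp [hq, hr], by simp [hq0]⟩, fun n hn t1 t2 ht => ?_⟩
  rw [sub_sub_cancel, abs_prod]
  rcases le_or_gt (ε / 4) (n * ‖(t2 : AddCircle π)‖) with hbig | hsmall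
  · exact (prod_abs_cos_le_of_le_mul_norm (by positivity) (by linarith) hn (by linarith)).trans
      (pow_le_pow_left₀ (sqrt_nonneg _) (le_max_right _ _) n)
  · exact (prod_abs_cos_le_of_add_mul_norm_le (by positivity) (by linarith)).trans
      (pow_le_pow_left₀ hq0.le (le_max_left _ _) n)
end

section
/- Let M(x) = min_{k∈ℤ}|x − kπ| and let 0 < t2 ≤ π/3, δ > 0, and m ≥ 0 an integer with m t2 ≤ δ ≤ (m+1) t2, and assume 3δ + 2t2 < π − δ. Then for any real t1 and any j, the inequalities M(t1 + j t2) < δ and M(t1 + j t2 + 2(m+1) t2) < δ cannot both hold. -/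
open Real

/-- Incompatibility lemma: let `M(x)` be the distance from `x` to the nearest multiple
of `π`, let `0 < t2 ≤ π/3`, `δ > 0`, `m ∈ ℕ` with `m t2 ≤ δ ≤ (m+1) t2`, and assume
`3 δ + 2 t2 ≤ π - δ`. Then for any real `t1` and any `j`, the inequalities
`M(t1 + j t2) < δ` and `M(t1 + j t2 + 2 (m+1) t2) < δ` cannot both hold. -/
theorem incompatibility
    (M : ℝ → ℝ) (hM : ∀ x, M x = ⨅ k : ℤ, |x - (k : ℝ) * Real.pi|)
    (t2 δ : ℝ) (ht2 : 0 < t2) (ht2' : t2 ≤ Real.pi / 3) (hδ : 0 < δ)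
    (m : ℕ) (hm1 : (m : ℝ) * t2 ≤ δ) (hm2 : δ ≤ ((m : ℝ) + 1) * t2)
    (htech : 3 * δ + 2 * t2 ≤ Real.pi - δ)
    (t1 : ℝ) (j : ℕ) :
    ¬ (M (t1 + (j : ℝ) * t2) < δ ∧
       M (t1 + (j : ℝ) * t2 + 2 * ((m : ℝ) + 1) * t2) < δ) := by
  rintro ⟨h1, h2⟩
  rw [hM] at h1 h2
  obtain ⟨k, hk⟩ := exists_lt_of_ciInf_lt h1
  obtain ⟨l, hl⟩ := exists_lt_of_ciInf_lt h2
  rw [abs_lt] at hk hl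
  have hn : ((l - k : ℤ) : ℝ) * Real.pi = (l : ℝ) * Real.pi - (k : ℝ) * Real.pi := by
    push_cast; ring
  have hπ : 0 < Real.pi := Real.pi_pos
  rcases le_or_gt (l - k) 0 with h | h
  · have : ((l - k : ℤ) : ℝ) ≤ 0 := by exact_mod_cast h
    nlinarith [this, hk.1, hk.2, hl.1, hl.2]
  · have h1' : (1 : ℤ) ≤ l - k := h
    have : (1 : ℝ) ≤ ((l - k : ℤ) : ℝ) := by exact_mod_cast h1'
    nlinarith [this, hk.1, hk.2, hl.1, hl.2]
end

section
/- Let S_n be the simple symmetric random walk (sums of i.i.d. ±1 Bernoulli steps) and A_n = ∑_{k=1}^n S_k. Let Ω_n^+ = {A_1 ≥ 0, ..., A_n ≥ 0}. Then for every k > 0, P(Ω_n^+ ∩ {S_n = −k}) ≤ P(Ω_n^+ ∩ {S_n = k}). -/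
open MeasureTheory ProbabilityTheory Finset

/-!
Reflect every step of the walk after its last visit to zero up to time `n`. Up to that visit the
path and its area are unchanged; afterwards the walk keeps a constant sign, so a path ending at
`-k < 0` is negative there, and its reflection is positive, making the area increase from its
nonnegative value at the last zero. The reflection fixes the last zero, hence is an involution,
so it injects the paths of `Ω_n^+ ∩ {S_n = -k}` into those of `Ω_n^+ ∩ {S_n = k}`. All sign
paths of length `n` have probability `2⁻ⁿ`, so counting paths compares the probabilities.
-/

namespace PersistenceReflection

section Paths

variable (x : ℕ → ℤ)

/-- The walk with steps `x 1, x 2, …`; the step `x 0` is ignored. -/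
def walk (j : ℕ) : ℤ := ∑ i ∈ Icc 1 j, x i

def area (j : ℕ) : ℤ := ∑ i ∈ Icc 1 j, walk x i

def lastZero (n : ℕ) : ℕ := Nat.findGreatest (fun j => walk x j = 0) n

def reflectAfter (m : ℕ) : ℕ → ℤ := fun i => if i ≤ m then x i else -x i

def reflectAfterLastZero (n : ℕ) : ℕ → ℤ := reflectAfter x (lastZero x n)

/-- Paths of length `n` in `Ω_n^+` ending at `c`. -/
def AreaNonnegEndsAt (n : ℕ) (c : ℤ) : Prop := (∀ j ∈ Icc 1 n, 0 ≤ area x j) ∧ walk x n = c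

variable {x}

@[simp] lemma walk_zero : walk x 0 = 0 := by simp [walk]

@[simp] lemma area_zero : area x 0 = 0 := by simp [area]

lemma walk_succ (j : ℕ) : walk x (j + 1) = walk x j + x (j + 1) :=
  sum_Icc_succ_top (by omega) _

lemma area_succ (j : ℕ) : area x (j + 1) = area x j + walk x (j + 1) :=
  sum_Icc_succ_top (by omega) _

lemma walk_congr {y : ℕ → ℤ} {n j : ℕ} (hxy : ∀ i ∈ Icc 1 n, x i = y i) (hj : j ≤ n) :
    walk x j = walk y j :=
  sum_congr rfl fun i hi => hxy i (Icc_subset_Icc_right hj hi)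

lemma area_congr {y : ℕ → ℤ} {n j : ℕ} (hxy : ∀ i ∈ Icc 1 n, x i = y i) (hj : j ≤ n) :
    area x j = area y j :=
  sum_congr rfl fun _ hi => walk_congr hxy ((mem_Icc.1 hi).2.trans hj)

lemma areaNonnegEndsAt_congr {y : ℕ → ℤ} {n : ℕ} {c : ℤ} (hxy : ∀ i ∈ Icc 1 n, x i = y i)
    (hx : AreaNonnegEndsAt x n c) : AreaNonnegEndsAt y n c :=
  ⟨fun j hj => area_congr hxy (mem_Icc.1 hj).2 ▸ hx.1 j hj, walk_congr hxy le_rfl ▸ hx.2⟩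

lemma lastZero_le (n : ℕ) : lastZero x n ≤ n := Nat.findGreatest_le n

lemma walk_lastZero (n : ℕ) : walk x (lastZero x n) = 0 :=
  Nat.findGreatest_spec (P := fun j => walk x j = 0) (Nat.zero_le n) walk_zero

lemma walk_ne_zero_of_lastZero_lt {n j : ℕ} (hj : lastZero x n < j) (hjn : j ≤ n) :
    walk x j ≠ 0 :=
  Nat.findGreatest_is_greatest hj hjn

/-- A walk with steps in `[-1, 1]` cannot change sign without visiting zero. -/
lemma walk_neg_of_lastZero_lt {n j : ℕ} (hstep : ∀ i ∈ Icc 1 n, |x i| ≤ 1) (hn : walk x n < 0)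
    (hj : lastZero x n < j) (hjn : j ≤ n) : walk x j < 0 := by
  induction hjn using Nat.decreasingInduction with
  | self => exact hn
  | of_succ j hjn ih =>
    have hnext := ih (by omega)
    have hbound := (abs_le.1 (hstep (j + 1) (mem_Icc.2 ⟨by omega, hjn⟩))).1
    have hne := walk_ne_zero_of_lastZero_lt hj hjn.le
    rw [walk_succ] at hnext
    omega

lemma walk_reflectAfter_of_le {m j : ℕ} (hj : j ≤ m) : walk (reflectAfter x m) j = walk x j :=
  sum_congr rfl fun _ hi => if_pos ((mem_Icc.1 hi).2.trans hj)

lemma walk_reflectAfter_of_ge {m j : ℕ} (hj : m ≤ j) :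
    walk (reflectAfter x m) j = 2 * walk x m - walk x j := by
  induction j, hj using Nat.le_induction with
  | base => rw [walk_reflectAfter_of_le le_rfl]; ring
  | succ j hmj ih =>
    rw [walk_succ, walk_succ, ih, reflectAfter, if_neg (by omega)]
    ring

lemma area_reflectAfter_of_le {m j : ℕ} (hj : j ≤ m) : area (reflectAfter x m) j = area x j :=
  sum_congr rfl fun _ hi => walk_reflectAfter_of_le ((mem_Icc.1 hi).2.trans hj)

lemma walk_reflectAfter_eq_zero_iff {m : ℕ} (hm : walk x m = 0) (j : ℕ) :
    walk (reflectAfter x m) j = 0 ↔ walk x j = 0 := by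
  rcases le_total j m with hj | hj
  · rw [walk_reflectAfter_of_le hj]
  · rw [walk_reflectAfter_of_ge hj, hm]
    omega

lemma lastZero_reflectAfterLastZero (n : ℕ) :
    lastZero (reflectAfterLastZero x n) n = lastZero x n :=
  have hzero := walk_reflectAfter_eq_zero_iff (walk_lastZero (x := x) n)
  le_antisymm (Nat.findGreatest_mono_left (fun j => (hzero j).1) n)
    (Nat.findGreatest_mono_left (fun j => (hzero j).2) n)

lemma reflectAfterLastZero_involutive (n : ℕ) :
    Function.Involutive fun x : ℕ → ℤ => reflectAfterLastZero x n := by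
  intro x
  funext i
  change reflectAfter (reflectAfterLastZero x n) (lastZero (reflectAfterLastZero x n) n) i = x i
  rw [lastZero_reflectAfterLastZero]
  simp only [reflectAfterLastZero, reflectAfter]
  split_ifs <;> simp

lemma area_le_area_reflectAfter {m j : ℕ} (hm : walk x m = 0)
    (hneg : ∀ i, m < i → i ≤ j → walk x i ≤ 0) (hmj : m ≤ j) :
    area x m ≤ area (reflectAfter x m) j := by
  induction j, hmj using Nat.le_induction with
  | base => exact (area_reflectAfter_of_le le_rfl).ge
  | succ j hmj ih =>
    have hwalk := walk_reflectAfter_of_ge (x := x) (by omega : m ≤ j + 1)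
    have hprev := ih fun i hi hij => hneg i hi (by omega)
    have hlast := hneg (j + 1) (by omega) le_rfl
    rw [area_succ]
    omega

lemma areaNonnegEndsAt_reflectAfterLastZero {n : ℕ} {k : ℤ} (hk : 0 < k)
    (hstep : ∀ i ∈ Icc 1 n, |x i| ≤ 1) (hx : AreaNonnegEndsAt x n (-k)) :
    AreaNonnegEndsAt (reflectAfterLastZero x n) n k := by
  obtain ⟨harea, hend⟩ := hx
  have hℓ := lastZero_le (x := x) n
  have hneg : ∀ i, lastZero x n < i → i ≤ n → walk x i ≤ 0 := fun i hi hin =>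
    (walk_neg_of_lastZero_lt hstep (by omega) hi hin).le
  refine ⟨fun j hj => ?_, ?_⟩
  · rcases le_total j (lastZero x n) with hjℓ | hℓj
    · rw [reflectAfterLastZero, area_reflectAfter_of_le hjℓ]
      exact harea j hj
    · have harea_ℓ : 0 ≤ area x (lastZero x n) := by
        rcases Nat.eq_zero_or_pos (lastZero x n) with h0 | hpos
        · rw [h0, area_zero]
        · exact harea _ (mem_Icc.2 ⟨hpos, hℓ⟩)
      exact harea_ℓ.trans (area_le_area_reflectAfter (walk_lastZero n)
        (fun i hi hij => hneg i hi (hij.trans (mem_Icc.1 hj).2)) hℓj)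
  · rw [reflectAfterLastZero, walk_reflectAfter_of_ge hℓ, walk_lastZero, hend]
    ring

end Paths

open Classical in
/-- The step sequences of the `2 ^ n` sign paths of length `n`, extended by `0`. -/
noncomputable def signPaths (n : ℕ) : Finset (ℕ → ℤ) :=
  (Fintype.piFinset fun _ : Fin n => ({1, -1} : Finset ℤ)).image fun y i =>
    if h : 1 ≤ i ∧ i ≤ n then y ⟨i - 1, by omega⟩ else 0

lemma mem_signPaths {n : ℕ} {x : ℕ → ℤ} :
    x ∈ signPaths n ↔ (∀ i ∈ Icc 1 n, x i = 1 ∨ x i = -1) ∧ ∀ i ∉ Icc 1 n, x i = 0 := by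
  simp only [signPaths, mem_image, Fintype.mem_piFinset, mem_insert, mem_singleton, mem_Icc]
  constructor
  · rintro ⟨y, hy, rfl⟩
    exact ⟨fun i hi => by simpa [dif_pos hi] using hy _, fun i hi => dif_neg hi⟩
  · rintro ⟨hsign, hzero⟩
    refine ⟨fun j => x (j + 1), fun j => hsign _ ⟨by omega, j.2⟩, funext fun i => ?_⟩
    split_ifs with hi
    · exact congrArg x (Nat.sub_add_cancel hi.1)
    · exact (hzero i hi).symm

lemma abs_le_one_of_mem_signPaths {n : ℕ} {x : ℕ → ℤ} (hx : x ∈ signPaths n) :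
    ∀ i ∈ Icc 1 n, |x i| ≤ 1 := fun i hi => by
  rcases (mem_signPaths.1 hx).1 i hi with h | h <;> simp [h]

lemma reflectAfter_mem_signPaths {n m : ℕ} {x : ℕ → ℤ} (hx : x ∈ signPaths n) :
    reflectAfter x m ∈ signPaths n := by
  obtain ⟨hsign, hzero⟩ := mem_signPaths.1 hx
  refine mem_signPaths.2 ⟨fun i hi => ?_, fun i hi => ?_⟩
  · unfold reflectAfter; split_ifs
    · exact hsign i hi
    · rcases hsign i hi with h | h <;> simp [h]
  · simp [reflectAfter, hzero i hi]

lemma ext_of_mem_signPaths {n : ℕ} {x y : ℕ → ℤ} (hx : x ∈ signPaths n) (hy : y ∈ signPaths n)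
    (hxy : ∀ i ∈ Icc 1 n, x i = y i) : x = y := by
  funext i
  by_cases hi : i ∈ Icc 1 n
  · exact hxy i hi
  · rw [(mem_signPaths.1 hx).2 i hi, (mem_signPaths.1 hy).2 i hi]

open Classical in
lemma card_areaNonnegEndsAt_neg_le {n : ℕ} {k : ℤ} (hk : 0 < k) :
    #{x ∈ signPaths n | AreaNonnegEndsAt x n (-k)} ≤ #{x ∈ signPaths n | AreaNonnegEndsAt x n k} :=
  card_le_card_of_injOn (fun x => reflectAfterLastZero x n)
    (fun x hx => by
      obtain ⟨hmem, hpath⟩ := mem_filter.1 hx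
      exact mem_filter.2 ⟨reflectAfter_mem_signPaths hmem,
        areaNonnegEndsAt_reflectAfterLastZero hk (abs_le_one_of_mem_signPaths hmem) hpath⟩)
    ((reflectAfterLastZero_involutive n).injective.injOn)

section Probability

variable {Ω : Type*} {X : ℕ → Ω → ℤ}

def followsOn (X : ℕ → Ω → ℤ) (n : ℕ) (x : ℕ → ℤ) : Set Ω := {ω | ∀ i ∈ Icc 1 n, X i ω = x i}

lemma pairwiseDisjoint_followsOn (n : ℕ) :
    (signPaths n : Set (ℕ → ℤ)).PairwiseDisjoint (followsOn X n) :=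
  fun _ hx _ hy hxy => Set.disjoint_left.2 fun _ hωx hωy =>
    hxy (ext_of_mem_signPaths hx hy fun i hi => (hωx i hi).symm.trans (hωy i hi))

variable [MeasureSpace Ω]

lemma measurableSet_followsOn (hmeas : ∀ i, Measurable (X i)) (n : ℕ) (x : ℕ → ℤ) :
    MeasurableSet (followsOn X n x) := by
  simp only [followsOn, Set.ofPred_forall]
  exact .biInter (Icc 1 n).countable_toSet fun i _ =>
    measurableSet_eq_fun (hmeas i) measurable_const

lemma measure_followsOn (hindep : iIndepFun X ℙ)
    (hdist : ∀ i, ℙ {ω | X i ω = 1} = 1/2 ∧ ℙ {ω | X i ω = -1} = 1/2) {n : ℕ} {x : ℕ → ℤ}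
    (hx : x ∈ signPaths n) : ℙ (followsOn X n x) = 2⁻¹ ^ n := by
  have hevent : followsOn X n x = ⋂ i ∈ Icc 1 n, X i ⁻¹' {x i} := by
    ext ω; simp [followsOn]
  rw [hevent, hindep.meas_biInter fun i _ => ⟨{x i}, measurableSet_singleton _, rfl⟩]
  have hstep : ∀ i ∈ Icc 1 n, ℙ (X i ⁻¹' {x i}) = 2⁻¹ := fun i hi => by
    rcases (mem_signPaths.1 hx).1 i hi with h | h
    · simpa [h, Set.preimage, one_div] using (hdist i).1
    · simpa [h, Set.preimage, one_div] using (hdist i).2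
  rw [prod_congr rfl hstep, prod_const, Nat.card_Icc, Nat.add_sub_cancel]

variable [IsProbabilityMeasure (ℙ : Measure Ω)]

lemma ae_eq_one_or_neg_one (hmeas : ∀ i, Measurable (X i))
    (hdist : ∀ i, ℙ {ω | X i ω = 1} = 1/2 ∧ ℙ {ω | X i ω = -1} = 1/2) (i : ℕ) :
    ∀ᵐ ω ∂ℙ, X i ω = 1 ∨ X i ω = -1 := by
  have hlevel (c : ℤ) : MeasurableSet {ω | X i ω = c} :=
    measurableSet_eq_fun (hmeas i) measurable_const
  have hdisj : Disjoint {ω | X i ω = 1} {ω | X i ω = -1} :=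
    Set.disjoint_left.2 fun ω h1 h2 => by simp_all
  have hunion : ℙ ({ω | X i ω = 1} ∪ {ω | X i ω = -1}) = 1 := by
    rw [measure_union hdisj (hlevel _), (hdist i).1, (hdist i).2, ENNReal.add_halves]
  exact (prob_compl_eq_zero_iff ((hlevel _).union (hlevel _))).2 hunion

lemma ae_exists_followsOn (hmeas : ∀ i, Measurable (X i))
    (hdist : ∀ i, ℙ {ω | X i ω = 1} = 1/2 ∧ ℙ {ω | X i ω = -1} = 1/2) (n : ℕ) :
    ∀ᵐ ω ∂ℙ, ∃ x ∈ signPaths n, ω ∈ followsOn X n x := by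
  filter_upwards [(Filter.eventually_all_finset (Icc 1 n)).2 fun i _ =>
    ae_eq_one_or_neg_one hmeas hdist i] with ω hω
  refine ⟨fun i => if i ∈ Icc 1 n then X i ω else 0, mem_signPaths.2 ⟨fun i hi => ?_,
    fun i hi => if_neg hi⟩, fun i hi => (if_pos hi).symm⟩
  rw [if_pos hi]
  exact hω i hi

open Classical in
lemma measure_eq_card_signPaths_mul (hmeas : ∀ i, Measurable (X i)) (hindep : iIndepFun X ℙ)
    (hdist : ∀ i, ℙ {ω | X i ω = 1} = 1/2 ∧ ℙ {ω | X i ω = -1} = 1/2) {n : ℕ}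
    (Q : (ℕ → ℤ) → Prop) (hQ : ∀ x y, (∀ i ∈ Icc 1 n, x i = y i) → Q x → Q y) :
    ℙ {ω | Q fun i => X i ω} = #{x ∈ signPaths n | Q x} * 2⁻¹ ^ n := by
  have hae : {ω | Q fun i => X i ω} =ᵐ[ℙ] ⋃ x ∈ {x ∈ signPaths n | Q x}, followsOn X n x := by
    filter_upwards [ae_exists_followsOn hmeas hdist n] with ω ⟨y, hy, hωy⟩
    change (ω ∈ {ω | Q fun i => X i ω}) = (ω ∈ ⋃ x ∈ {x ∈ signPaths n | Q x}, followsOn X n x)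
    simp only [Set.mem_iUnion, mem_filter, exists_prop, eq_iff_iff, Set.mem_ofPred_eq]
    exact ⟨fun hω => ⟨y, ⟨hy, hQ _ _ hωy hω⟩, hωy⟩,
      fun ⟨x, ⟨_, hx⟩, hωx⟩ => hQ _ _ (fun i hi => (hωx i hi).symm) hx⟩
  rw [measure_congr hae, measure_biUnion_finset
      ((pairwiseDisjoint_followsOn n).subset (filter_subset _ _))
      fun x _ => measurableSet_followsOn hmeas n x,
    sum_congr rfl fun x hx => measure_followsOn hindep hdist (mem_filter.1 hx).1,
    sum_const, nsmul_eq_mul]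

end Probability

end PersistenceReflection

open PersistenceReflection

/-- For the simple symmetric random walk `S` with integrated walk `A` and
`Ω_n^+ = {A_1 ≥ 0, …, A_n ≥ 0}`, for every `k > 0` one has
`P(Ω_n^+ ∩ {S_n = -k}) ≤ P(Ω_n^+ ∩ {S_n = k})`. -/
theorem persistence_reflection
    {Ω : Type*} [MeasureSpace Ω] [IsProbabilityMeasure (ℙ : Measure Ω)]
    (X : ℕ → Ω → ℤ) (hmeas : ∀ i, Measurable (X i))
    (hindep : iIndepFun X ℙ)
    (hdist : ∀ i, ℙ {ω | X i ω = 1} = 1/2 ∧ ℙ {ω | X i ω = -1} = 1/2)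
    (S A : ℕ → Ω → ℤ)
    (hS : ∀ n ω, S n ω = ∑ i ∈ Finset.Icc 1 n, X i ω)
    (hA : ∀ n ω, A n ω = ∑ i ∈ Finset.Icc 1 n, S i ω)
    (n : ℕ) (k : ℤ) (hk : 0 < k) :
    ℙ ({ω | ∀ j ∈ Finset.Icc 1 n, 0 ≤ A j ω} ∩ {ω | S n ω = -k})
      ≤ ℙ ({ω | ∀ j ∈ Finset.Icc 1 n, 0 ≤ A j ω} ∩ {ω | S n ω = k}) := by
  have hevent : ∀ c, {ω | ∀ j ∈ Finset.Icc 1 n, 0 ≤ A j ω} ∩ {ω | S n ω = c}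
      = {ω | AreaNonnegEndsAt (fun i => X i ω) n c} := fun c => by
    ext ω
    simp only [Set.mem_inter_iff, Set.mem_ofPred_eq, AreaNonnegEndsAt, area, walk, hA, hS]
  rw [hevent, hevent,
    measure_eq_card_signPaths_mul hmeas hindep hdist _ fun _ _ => areaNonnegEndsAt_congr,
    measure_eq_card_signPaths_mul hmeas hindep hdist _ fun _ _ => areaNonnegEndsAt_congr]
  gcongr ?_ * _
  exact_mod_cast card_areaNonnegEndsAt_neg_le hk
end

section
/- Let S_n be the simple symmetric random walk, A_n = ∑_{k≤n} S_k, and Ω_n^+ = {A_j ≥ 0, 1 ≤ j ≤ n}. Then for every positive integer R, P({max_{0≤k≤n} S_k ≥ R} ∩ Ω_n^+) ≤ 2 P({S_n ≥ R} ∩ Ω_n^+). -/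
open MeasureTheory ProbabilityTheory Finset

/-!
Only the first `n` steps matter, and each `±1` sequence of length `n` has probability `2⁻ⁿ`,
so both sides count sign sequences. A sequence whose walk reaches `R` but ends below `R` is
reflected after its last visit to `R`. This is an involution onto walks ending above `R`, and it
can only raise the partial sums, so it preserves the monotone event `Ω_n^+`.
-/

theorem exists_eq_of_le_of_le_of_succ_le_add_one (f : ℕ → ℤ) {a b : ℕ} (hab : a ≤ b)
    (hstep : ∀ k, a ≤ k → k < b → f (k + 1) ≤ f k + 1) {r : ℤ} (ha : f a ≤ r) (hb : r ≤ f b) :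
    ∃ k, a ≤ k ∧ k ≤ b ∧ f k = r := by
  induction b, hab using Nat.le_induction with
  | base => exact ⟨a, le_rfl, le_rfl, le_antisymm ha hb⟩
  | succ b hab ih =>
    by_cases hrb : r ≤ f b
    · obtain ⟨k, hak, hkb, hk⟩ := ih (fun k hak hkb => hstep k hak (by omega)) hrb
      exact ⟨k, hak, by omega, hk⟩
    · have := hstep b hab (by omega)
      exact ⟨b + 1, by omega, le_rfl, by omega⟩

namespace SignPath

def partialSum (x : ℕ → ℤ) (k : ℕ) : ℤ := ∑ i ∈ Icc 1 k, x i

def IsSignSeq (n : ℕ) (x : ℕ → ℤ) : Prop :=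
  (∀ i ∈ Icc 1 n, x i = 1 ∨ x i = -1) ∧ ∀ i ∉ Icc 1 n, x i = 0

@[simp]
lemma partialSum_zero (x : ℕ → ℤ) : partialSum x 0 = 0 := by simp [partialSum]

lemma partialSum_succ (x : ℕ → ℤ) (k : ℕ) : partialSum x (k + 1) = partialSum x k + x (k + 1) :=
  sum_Icc_succ_top (by omega) x

lemma partialSum_add_sum_Ioc (x : ℕ → ℤ) {a k : ℕ} (h : a ≤ k) :
    partialSum x a + ∑ i ∈ Ioc a k, x i = partialSum x k := by
  simp only [partialSum, show ∀ m, Icc 1 m = Ioc 0 m from Icc_add_one_left_eq_Ioc 0]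
  exact sum_Ioc_consecutive x (Nat.zero_le a) h

variable {n : ℕ} {r : ℤ} {x : ℕ → ℤ}

lemma IsSignSeq.step {k : ℕ} (hx : IsSignSeq n x) (hk : k < n) :
    x (k + 1) = 1 ∨ x (k + 1) = -1 :=
  hx.1 (k + 1) (mem_Icc.2 ⟨by omega, by omega⟩)

lemma IsSignSeq.exists_partialSum_eq (hx : IsSignSeq n x) (hr : 0 ≤ r)
    (hhit : ∃ k ≤ n, r ≤ partialSum x k) : ∃ k ≤ n, partialSum x k = r := by
  obtain ⟨k, hkn, hk⟩ := hhit
  obtain ⟨j, -, hjk, hj⟩ := exists_eq_of_le_of_le_of_succ_le_add_one (partialSum x) (Nat.zero_le k)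
    (fun m _ hm => by have := hx.step (k := m) (by omega); rw [partialSum_succ]; omega)
    (by simpa using hr) hk
  exact ⟨j, hjk.trans hkn, hj⟩

-- `Nat.findGreatest` returns `0` when the walk does not visit `r` up to time `n`.
def lastHit (n : ℕ) (r : ℤ) (x : ℕ → ℤ) : ℕ := Nat.findGreatest (fun k => partialSum x k = r) n

lemma lastHit_le : lastHit n r x ≤ n := Nat.findGreatest_le n

lemma partialSum_lastHit {k : ℕ} (hkn : k ≤ n) (hk : partialSum x k = r) :
    partialSum x (lastHit n r x) = r :=
  Nat.findGreatest_spec (P := fun k => partialSum x k = r) hkn hk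

lemma partialSum_ne_of_lastHit_lt {k : ℕ} (hk : lastHit n r x < k) (hkn : k ≤ n) :
    partialSum x k ≠ r :=
  Nat.findGreatest_is_greatest hk hkn

lemma IsSignSeq.partialSum_lt_of_lastHit_lt (hx : IsSignSeq n x) (hn : partialSum x n < r)
    {k : ℕ} (hk : lastHit n r x < k) (hkn : k ≤ n) : partialSum x k < r := by
  by_contra! hrk
  obtain ⟨j, hkj, hjn, hj⟩ := exists_eq_of_le_of_le_of_succ_le_add_one (fun m => -partialSum x m)
    hkn (fun m hkm hmn => by
      have := hx.step (k := m) (by omega); simp only [partialSum_succ]; omega)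
    (r := -r) (by omega) (by omega)
  exact partialSum_ne_of_lastHit_lt (hk.trans_le hkj) hjn (by omega)

-- No cutoff at `n` is needed: sign sequences vanish after time `n`.
def reflectAfterLastHit (n : ℕ) (r : ℤ) (x : ℕ → ℤ) (i : ℕ) : ℤ :=
  if lastHit n r x < i then -x i else x i

lemma isSignSeq_reflectAfterLastHit (hx : IsSignSeq n x) :
    IsSignSeq n (reflectAfterLastHit n r x) := by
  refine ⟨fun i hi => ?_, fun i hi => ?_⟩ <;> unfold SignPath.reflectAfterLastHit
  · rcases hx.1 i hi with h | h <;> split_ifs <;> simp [h]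
  · split_ifs <;> simp [hx.2 i hi]

lemma partialSum_reflectAfterLastHit_of_le {k : ℕ} (hk : k ≤ lastHit n r x) :
    partialSum (reflectAfterLastHit n r x) k = partialSum x k :=
  sum_congr rfl fun i hi => if_neg (by rw [mem_Icc] at hi; omega)

lemma partialSum_reflectAfterLastHit_of_ge {k : ℕ} (hk : lastHit n r x ≤ k) :
    partialSum (reflectAfterLastHit n r x) k
      = 2 * partialSum x (lastHit n r x) - partialSum x k := by
  have hIoc : ∑ i ∈ Ioc (lastHit n r x) k, reflectAfterLastHit n r x i
      = -∑ i ∈ Ioc (lastHit n r x) k, x i := by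
    rw [← sum_neg_distrib]
    exact sum_congr rfl fun i hi => if_pos (mem_Ioc.1 hi).1
  have := partialSum_add_sum_Ioc (reflectAfterLastHit n r x) hk
  have := partialSum_add_sum_Ioc x hk
  rw [partialSum_reflectAfterLastHit_of_le le_rfl] at *
  linarith

lemma IsSignSeq.partialSum_le_reflectAfterLastHit (hx : IsSignSeq n x)
    (hσ : partialSum x (lastHit n r x) = r) (hn : partialSum x n < r) {k : ℕ} (hkn : k ≤ n) :
    partialSum x k ≤ partialSum (reflectAfterLastHit n r x) k := by
  rcases le_or_gt k (lastHit n r x) with hk | hk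
  · rw [partialSum_reflectAfterLastHit_of_le hk]
  · have := hx.partialSum_lt_of_lastHit_lt hn hk hkn
    rw [partialSum_reflectAfterLastHit_of_ge hk.le, hσ]
    omega

lemma lt_partialSum_reflectAfterLastHit (hσ : partialSum x (lastHit n r x) = r)
    (hn : partialSum x n < r) : r < partialSum (reflectAfterLastHit n r x) n := by
  rw [partialSum_reflectAfterLastHit_of_ge lastHit_le, hσ]
  omega

lemma IsSignSeq.lastHit_reflectAfterLastHit (hx : IsSignSeq n x)
    (hσ : partialSum x (lastHit n r x) = r) (hn : partialSum x n < r) :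
    lastHit n r (reflectAfterLastHit n r x) = lastHit n r x := by
  have hσ' : partialSum (reflectAfterLastHit n r x) (lastHit n r x) = r := by
    rwa [partialSum_reflectAfterLastHit_of_le le_rfl]
  refine le_antisymm ?_ (Nat.le_findGreatest lastHit_le hσ')
  by_contra! hlt
  have hk := partialSum_lastHit lastHit_le hσ'
  have := hx.partialSum_lt_of_lastHit_lt hn hlt lastHit_le
  rw [partialSum_reflectAfterLastHit_of_ge hlt.le, hσ] at hk
  omega

lemma IsSignSeq.reflectAfterLastHit_reflectAfterLastHit (hx : IsSignSeq n x)
    (hσ : partialSum x (lastHit n r x) = r) (hn : partialSum x n < r) :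
    reflectAfterLastHit n r (reflectAfterLastHit n r x) = x := by
  funext i
  simp only [reflectAfterLastHit, hx.lastHit_reflectAfterLastHit hσ hn]
  split_ifs <;> simp

open Classical in
noncomputable def signs (n : ℕ) : Finset (ℕ → ℤ) :=
  (Icc 1 n).powerset.image fun s i => if i ∈ Icc 1 n then if i ∈ s then 1 else -1 else 0

lemma mem_signs : x ∈ signs n ↔ IsSignSeq n x := by
  classical
  constructor
  · intro hx
    obtain ⟨s, -, rfl⟩ := mem_image.1 hx
    refine ⟨fun i hi => ?_, fun i hi => by simp [hi]⟩
    by_cases his : i ∈ s <;> simp [hi, his]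
  · refine fun hx => mem_image.2 ⟨{i ∈ Icc 1 n | x i = 1}, by simp, funext fun i => ?_⟩
    by_cases hi : i ∈ Icc 1 n
    · rcases hx.1 i hi with h | h <;> simp [hi, h]
    · simp [hi, hx.2 i hi]

theorem card_filter_exists_le_partialSum_le {r : ℤ} (hr : 0 ≤ r) (M : (ℕ → ℤ) → Prop)
    [DecidablePred M] (hM : ∀ x y, (∀ k ≤ n, partialSum x k ≤ partialSum y k) → M x → M y) :
    #{x ∈ signs n | (∃ k ≤ n, r ≤ partialSum x k) ∧ M x}
      ≤ 2 * #{x ∈ signs n | r ≤ partialSum x n ∧ M x} := by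
  set hit := {x ∈ signs n | (∃ k ≤ n, r ≤ partialSum x k) ∧ M x}
  set ends := {x ∈ signs n | r ≤ partialSum x n ∧ M x}
  have hreflect : ∀ x ∈ {x ∈ hit | ¬ r ≤ partialSum x n}, IsSignSeq n x ∧
      partialSum x (lastHit n r x) = r ∧ partialSum x n < r ∧ M x := by
    intro x hx
    simp only [hit, mem_filter, mem_signs] at hx
    obtain ⟨⟨hx, hhit, hMx⟩, hn⟩ := hx
    obtain ⟨k, hkn, hk⟩ := hx.exists_partialSum_eq hr hhit
    exact ⟨hx, partialSum_lastHit hkn hk, not_le.1 hn, hMx⟩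
  have hle : #{x ∈ hit | r ≤ partialSum x n} ≤ #ends :=
    card_le_card fun x hx => by simp only [hit, ends, mem_filter] at hx ⊢; tauto
  have hlt : #{x ∈ hit | ¬ r ≤ partialSum x n} ≤ #ends := by
    refine card_le_card_of_injOn (reflectAfterLastHit n r) (fun x hx => ?_) fun x hx y hy hxy => ?_
    · obtain ⟨hx, hσ, hn, hMx⟩ := hreflect x hx
      simp only [ends, coe_filter, Set.mem_ofPred_eq, mem_signs]
      exact ⟨isSignSeq_reflectAfterLastHit hx, (lt_partialSum_reflectAfterLastHit hσ hn).le,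
        hM x _ (fun k hk => hx.partialSum_le_reflectAfterLastHit hσ hn hk) hMx⟩
    · obtain ⟨hx, hσx, hnx, -⟩ := hreflect x hx
      obtain ⟨hy, hσy, hny, -⟩ := hreflect y hy
      rw [← hx.reflectAfterLastHit_reflectAfterLastHit hσx hnx,
        ← hy.reflectAfterLastHit_reflectAfterLastHit hσy hny, hxy]
  rw [← card_filter_add_card_filter_not (fun x => r ≤ partialSum x n)]
  omega

variable {Ω : Type*} {X : ℕ → Ω → ℤ}

-- Truncating at `n` makes `steps X n ω` range almost surely over the finite set `signs n`.
def steps (X : ℕ → Ω → ℤ) (n : ℕ) (ω : Ω) (i : ℕ) : ℤ := if i ∈ Icc 1 n then X i ω else 0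

lemma partialSum_steps {ω : Ω} {k : ℕ} (hk : k ≤ n) :
    partialSum (steps X n ω) k = ∑ i ∈ Icc 1 k, X i ω :=
  sum_congr rfl fun _ hi => if_pos (Icc_subset_Icc_right hk hi)

lemma steps_preimage_singleton {x : ℕ → ℤ} (hx : IsSignSeq n x) :
    steps X n ⁻¹' {x} = ⋂ i ∈ Icc 1 n, X i ⁻¹' {x i} := by
  ext ω
  simp only [Set.mem_preimage, Set.mem_singleton_iff, Set.mem_iInter, funext_iff, steps]
  refine forall_congr' fun i => ?_
  by_cases hi : i ∈ Icc 1 n <;> simp [hi, hx.2 i]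

variable [MeasureSpace Ω]

lemma measurable_steps (hmeas : ∀ i, Measurable (X i)) : Measurable (steps X n) :=
  measurable_pi_lambda _ fun _ => by unfold steps; split_ifs <;> fun_prop

lemma measure_steps_preimage_singleton (hindep : iIndepFun X ℙ)
    (hdist : ∀ i, ℙ {ω | X i ω = 1} = 1/2 ∧ ℙ {ω | X i ω = -1} = 1/2) {x : ℕ → ℤ}
    (hx : IsSignSeq n x) : ℙ (steps X n ⁻¹' {x}) = (1 / 2) ^ n := by
  rw [steps_preimage_singleton hx, hindep.measure_inter_preimage_eq_mul _
    fun i _ => measurableSet_singleton (x i)]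
  rw [prod_congr rfl fun i hi => ?_, prod_const, Nat.card_Icc, Nat.add_sub_cancel]
  rcases hx.1 i hi with h | h <;> rw [h]
  exacts [(hdist i).1, (hdist i).2]

variable [IsProbabilityMeasure (ℙ : Measure Ω)]

lemma ae_isSignSeq_steps (hmeas : ∀ i, Measurable (X i))
    (hdist : ∀ i, ℙ {ω | X i ω = 1} = 1/2 ∧ ℙ {ω | X i ω = -1} = 1/2) :
    ∀ᵐ ω, IsSignSeq n (steps X n ω) := by
  have hsign : ∀ i, ∀ᵐ ω, X i ω = 1 ∨ X i ω = -1 := by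
    intro i
    have hdisj : Disjoint {ω | X i ω = 1} {ω | X i ω = -1} :=
      Set.disjoint_left.2 fun ω h1 h2 => by simp_all
    have h1 : MeasurableSet {ω | X i ω = 1} := hmeas i (measurableSet_singleton 1)
    have h2 : MeasurableSet {ω | X i ω = -1} := hmeas i (measurableSet_singleton (-1))
    rw [ae_iff_measure_eq (p := fun ω => X i ω = 1 ∨ X i ω = -1) (h1.union h2).nullMeasurableSet,
      Set.ofPred_or, measure_union hdisj h2, (hdist i).1, (hdist i).2, ENNReal.add_halves,
      measure_univ]
  filter_upwards [ae_all_iff.2 hsign] with ω hω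
  exact ⟨fun i hi => by simp [steps, hi, hω i], fun i hi => by simp [steps, hi]⟩

theorem measure_setOf_steps (hmeas : ∀ i, Measurable (X i)) (hindep : iIndepFun X ℙ)
    (hdist : ∀ i, ℙ {ω | X i ω = 1} = 1/2 ∧ ℙ {ω | X i ω = -1} = 1/2)
    (P : (ℕ → ℤ) → Prop) [DecidablePred P] :
    ℙ {ω | P (steps X n ω)} = #{x ∈ signs n | P x} * (1 / 2) ^ n := by
  calc ℙ {ω | P (steps X n ω)} = ℙ (steps X n ⁻¹' ↑{x ∈ signs n | P x}) := by
        refine measure_congr (Filter.eventuallyEq_set.2 ?_)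
        filter_upwards [ae_isSignSeq_steps (n := n) hmeas hdist] with ω hω
        simp [mem_signs, hω]
    _ = ∑ x ∈ {x ∈ signs n | P x}, ℙ (steps X n ⁻¹' {x}) := by
        rw [← Set.biUnion_preimage_singleton, set_biUnion_coe, measure_biUnion_finset
          (Set.pairwiseDisjoint_fiber _ _)
          fun x _ => measurableSet_singleton x |>.preimage (measurable_steps hmeas)]
    _ = #{x ∈ signs n | P x} * (1 / 2) ^ n := by
        rw [sum_congr rfl fun x hx => measure_steps_preimage_singleton hindep hdist
          (mem_signs.1 (mem_filter.1 hx).1), sum_const, nsmul_eq_mul]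

end SignPath

open SignPath

theorem max_reflection_bound_general
    {Ω : Type*} [MeasureSpace Ω] [IsProbabilityMeasure (ℙ : Measure Ω)]
    (X : ℕ → Ω → ℤ) (hmeas : ∀ i, Measurable (X i))
    (hindep : iIndepFun X ℙ)
    (hdist : ∀ i, ℙ {ω | X i ω = 1} = 1/2 ∧ ℙ {ω | X i ω = -1} = 1/2)
    (S A : ℕ → Ω → ℤ)
    (hS : ∀ n ω, S n ω = ∑ i ∈ Finset.Icc 1 n, X i ω)
    (hA : ∀ n ω, A n ω = ∑ i ∈ Finset.Icc 1 n, S i ω)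
    (n : ℕ) (R : ℕ) :
    ℙ ({ω | ∃ k ≤ n, (R : ℤ) ≤ S k ω} ∩ {ω | ∀ j ∈ Finset.Icc 1 n, 0 ≤ A j ω})
      ≤ 2 * ℙ ({ω | (R : ℤ) ≤ S n ω} ∩ {ω | ∀ j ∈ Finset.Icc 1 n, 0 ≤ A j ω}) := by
  classical
  have hS' : ∀ ω, ∀ k ≤ n, S k ω = partialSum (steps X n ω) k := fun ω k hk => by
    rw [hS, partialSum_steps hk]
  set M : (ℕ → ℤ) → Prop := fun x => ∀ j ∈ Icc 1 n, 0 ≤ ∑ i ∈ Icc 1 j, partialSum x i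
  have hM : ∀ ω, (∀ j ∈ Icc 1 n, 0 ≤ A j ω) ↔ M (steps X n ω) := fun ω => by
    refine forall₂_congr fun j hj => ?_
    rw [hA, sum_congr rfl fun i hi => hS' ω i ((mem_Icc.1 hi).2.trans (mem_Icc.1 hj).2)]
  have hmax : {ω | ∃ k ≤ n, (R : ℤ) ≤ S k ω} ∩ {ω | ∀ j ∈ Icc 1 n, 0 ≤ A j ω}
      = {ω | (∃ k ≤ n, (R : ℤ) ≤ partialSum (steps X n ω) k) ∧ M (steps X n ω)} := by
    ext ω
    simp only [Set.mem_inter_iff, Set.mem_ofPred_eq]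
    exact and_congr (exists_congr fun k => and_congr_right fun hk => by rw [hS' ω k hk]) (hM ω)
  have hend : {ω | (R : ℤ) ≤ S n ω} ∩ {ω | ∀ j ∈ Icc 1 n, 0 ≤ A j ω}
      = {ω | (R : ℤ) ≤ partialSum (steps X n ω) n ∧ M (steps X n ω)} := by
    ext ω
    simp only [Set.mem_inter_iff, Set.mem_ofPred_eq]
    exact and_congr (by rw [hS' ω n le_rfl]) (hM ω)
  have hcard := card_filter_exists_le_partialSum_le (n := n) (Int.natCast_nonneg R) M
    fun x y hxy hx j hj => (hx j hj).trans <| sum_le_sum fun i hi =>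
      hxy i ((mem_Icc.1 hi).2.trans (mem_Icc.1 hj).2)
  rw [hmax, hend,
    measure_setOf_steps hmeas hindep hdist fun x => (∃ k ≤ n, (R : ℤ) ≤ partialSum x k) ∧ M x,
    measure_setOf_steps hmeas hindep hdist fun x => (R : ℤ) ≤ partialSum x n ∧ M x, ← mul_assoc]
  gcongr
  exact_mod_cast hcard

/-- For the simple symmetric random walk `S`, integrated walk `A`, and
`Ω_n^+ = {A_1 ≥ 0, …, A_n ≥ 0}`, for every integer `R ≥ 1`,
`P({max_{0≤k≤n} S_k ≥ R} ∩ Ω_n^+) ≤ 2 P({S_n ≥ R} ∩ Ω_n^+)`. -/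
theorem max_reflection_bound
    {Ω : Type*} [MeasureSpace Ω] [IsProbabilityMeasure (ℙ : Measure Ω)]
    (X : ℕ → Ω → ℤ) (hmeas : ∀ i, Measurable (X i))
    (hindep : iIndepFun X ℙ)
    (hdist : ∀ i, ℙ {ω | X i ω = 1} = 1/2 ∧ ℙ {ω | X i ω = -1} = 1/2)
    (S A : ℕ → Ω → ℤ)
    (hS : ∀ n ω, S n ω = ∑ i ∈ Finset.Icc 1 n, X i ω)
    (hA : ∀ n ω, A n ω = ∑ i ∈ Finset.Icc 1 n, S i ω)
    (n : ℕ) (R : ℕ) (hR : 1 ≤ R) :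
    ℙ ({ω | ∃ k ≤ n, (R : ℤ) ≤ S k ω} ∩ {ω | ∀ j ∈ Finset.Icc 1 n, 0 ≤ A j ω})
      ≤ 2 * ℙ ({ω | (R : ℤ) ≤ S n ω} ∩ {ω | ∀ j ∈ Finset.Icc 1 n, 0 ≤ A j ω}) :=
  max_reflection_bound_general X hmeas hindep hdist S A hS hA n R
end

section
/- There exists a constant C > 0 such that for all n ≥ 1, E[S_{n+1} | S_1 > 0, S_2 > 0, ..., S_{n+1} > 0] ≤ C √(n+1), where S is the simple symmetric random walk. -/
open MeasureTheory ProbabilityTheory Finset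

/-!
Let `A_m` be the event that the walk stays positive up to time `m`. For `m ≥ 1` and every `f`
with `f 0 = 0`, `E[f(S_{m+1}); A_{m+1}] = E[(f(S_m + 1) + f(S_m - 1)) / 2; A_m]`: the only step
that leaves `A` goes from `1` to `0`, where `f` vanishes. Taking `f t = t` and `f t = t³` gives
`E[S_m; A_m] = 1/2` and `E[S_m³; A_m] = (3m - 2)/2`, and Hölder's inequality
`E[S_m; A_m]³ ≤ P(A_m)² E[S_m³; A_m]` turns these into `E[S_m | A_m]² ≤ 3m - 2`.
All expectations are computed by counting the `2^m` equally likely sign sequences.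
-/

namespace SimpleRandomWalk

def step (b : Bool) : ℤ := if b then 1 else -1

def walkPos {m : ℕ} (x : Fin m → ℤ) (j : ℕ) : ℤ := ∑ i : Fin m with i.val < j, x i

def StaysPositive {m : ℕ} (x : Fin m → ℤ) : Prop := ∀ j ∈ Icc 1 m, 0 < walkPos x j

instance {m : ℕ} : DecidablePred (StaysPositive (m := m)) := fun _ =>
  inferInstanceAs (Decidable (∀ j ∈ Icc 1 m, _))

variable {m : ℕ}

lemma walkPos_snoc (x : Fin m → ℤ) (a : ℤ) (j : ℕ) :
    walkPos (Fin.snoc x a : Fin (m + 1) → ℤ) j = walkPos x j + if m < j then a else 0 := by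
  simp only [walkPos, sum_filter, Fin.sum_univ_castSucc, Fin.snoc_castSucc, Fin.snoc_last,
    Fin.val_castSucc, Fin.val_last]

lemma walkPos_of_le (x : Fin m → ℤ) {j : ℕ} (h : m ≤ j) : walkPos x j = ∑ i, x i := by
  rw [walkPos, filter_true_of_mem fun i _ => i.isLt.trans_le h]

lemma staysPositive_snoc_iff (x : Fin m → ℤ) (a : ℤ) :
    StaysPositive (Fin.snoc x a : Fin (m + 1) → ℤ) ↔
      StaysPositive x ∧ 0 < walkPos x m + a := by
  simp only [StaysPositive, mem_Icc, walkPos_snoc]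
  constructor
  · intro h
    refine ⟨fun j hj => ?_, ?_⟩
    · simpa [show ¬ m < j by omega] using h j ⟨hj.1, by omega⟩
    · simpa [walkPos_of_le x le_rfl, walkPos_of_le x (Nat.le_succ m)]
        using h (m + 1) ⟨by omega, le_rfl⟩
  · rintro ⟨hx, hlast⟩ j ⟨hj1, hj2⟩
    rcases hj2.lt_or_eq with hj | rfl
    · simpa [show ¬ m < j by omega] using hx j ⟨hj1, by omega⟩
    · simpa [walkPos_of_le x le_rfl, walkPos_of_le x (Nat.le_succ m)] using hlast

lemma StaysPositive.walkPos_pos {x : Fin m → ℤ} (hx : StaysPositive x) (hm : 1 ≤ m) :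
    0 < walkPos x m :=
  hx m (mem_Icc.2 ⟨hm, le_rfl⟩)

lemma StaysPositive.walkPos_nonneg {x : Fin m → ℤ} (hx : StaysPositive x) :
    0 ≤ walkPos x m := by
  rcases Nat.eq_zero_or_pos m with rfl | hm
  · simp [walkPos]
  · exact (hx.walkPos_pos hm).le

def positivePaths (m : ℕ) : Finset (Fin m → Bool) := {b | StaysPositive (step ∘ b)}

/-- `2 ^ m` times `E[f(S_m); A_m]`. -/
def positiveSum (m : ℕ) (f : ℤ → ℝ) : ℝ :=
  ∑ b ∈ positivePaths m, f (walkPos (step ∘ b) m)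

lemma sum_bool_tuple_succ {M : Type*} [AddCommMonoid M] (F : (Fin (m + 1) → Bool) → M) :
    ∑ b, F b = ∑ b : Fin m → Bool, (F (Fin.snoc b true) + F (Fin.snoc b false)) := by
  rw [← (Fin.snocEquiv fun _ => Bool).sum_comp, Fintype.sum_prod_type, Fintype.sum_bool,
    sum_add_distrib]
  rfl

lemma positiveSum_zero (f : ℤ → ℝ) : positiveSum 0 f = f 0 := by
  simp [positiveSum, positivePaths, StaysPositive, walkPos]

lemma positiveSum_succ (f : ℤ → ℝ) :
    positiveSum (m + 1) f =
      positiveSum m fun t => f (t + 1) + if 0 < t - 1 then f (t - 1) else 0 := by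
  simp only [positiveSum, positivePaths, sum_filter]
  rw [sum_bool_tuple_succ]
  refine sum_congr rfl fun b _ => ?_
  simp only [Fin.comp_snoc, staysPositive_snoc_iff, walkPos_snoc,
    lt_add_one, if_true, walkPos_of_le _ (Nat.le_succ m), ← walkPos_of_le (step ∘ b) le_rfl]
  by_cases hb : StaysPositive (step ∘ b)
  · have ht := hb.walkPos_nonneg
    simp only [step, hb, true_and, if_true, Bool.false_eq_true, if_false, ← sub_eq_add_neg,
      if_pos (by omega : 0 < walkPos (step ∘ b) m + 1)]
  · simp [hb]

lemma positiveSum_one (f : ℤ → ℝ) : positiveSum 1 f = f 1 := by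
  simp [positiveSum_succ, positiveSum_zero]

lemma positiveSum_succ_of_map_zero (hm : 1 ≤ m) {f : ℤ → ℝ} (hf : f 0 = 0) :
    positiveSum (m + 1) f = positiveSum m fun t => f (t + 1) + f (t - 1) := by
  rw [positiveSum_succ]
  refine sum_congr rfl fun b hb => ?_
  have hpos := (mem_filter.1 hb).2.walkPos_pos hm
  dsimp only
  split_ifs with h
  · rfl
  · rw [show walkPos (step ∘ b) m - 1 = 0 by omega, hf, add_zero]

lemma positiveSum_intCast (hm : 1 ≤ m) : positiveSum m (fun t => (t : ℝ)) = 2 ^ (m - 1) := by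
  induction m, hm using Nat.le_induction with
  | base => simp [positiveSum_one]
  | succ m hm ih =>
    rw [positiveSum_succ_of_map_zero hm (by simp)]
    simp only [positiveSum] at ih ⊢
    have : ∀ t : ℤ, ((t + 1 : ℤ) : ℝ) + ((t - 1 : ℤ) : ℝ) = 2 * t := fun t => by
      push_cast; ring
    simp only [this, ← mul_sum, ih]
    rw [← pow_succ', Nat.sub_add_cancel hm, Nat.add_sub_cancel]

lemma positiveSum_intCast_cube (hm : 1 ≤ m) :
    positiveSum m (fun t => (t : ℝ) ^ 3) = 2 ^ (m - 1) * (3 * m - 2) := by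
  induction m, hm using Nat.le_induction with
  | base => norm_num [positiveSum_one]
  | succ m hm ih =>
    rw [positiveSum_succ_of_map_zero hm (by simp)]
    have hid := positiveSum_intCast hm
    simp only [positiveSum] at ih hid ⊢
    push_cast
    have : ∀ t : ℝ, (t + 1) ^ 3 + (t - 1) ^ 3 = 2 * t ^ 3 + 6 * t := fun t => by ring
    simp only [this, sum_add_distrib, ← mul_sum, ih, hid]
    rw [show m = m - 1 + 1 by omega, pow_succ]
    push_cast
    ring

lemma positiveSum_intCast_div_card_le (hm : 1 ≤ m) :
    positiveSum m (fun t => (t : ℝ)) / #(positivePaths m) ≤ 2 * √m := by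
  set N : ℝ := (#(positivePaths m) : ℝ)
  have hP1 : 0 < positiveSum m (fun t => (t : ℝ)) := by rw [positiveSum_intCast hm]; positivity
  have hN : 0 < N := Nat.cast_pos.2 (card_pos.2 (nonempty_of_sum_ne_zero hP1.ne'))
  have holder :
      positiveSum m (fun t => (t : ℝ)) ^ 3 ≤ N ^ 2 * positiveSum m (fun t => (t : ℝ) ^ 3) :=
    pow_sum_le_card_mul_sum_pow
      (fun b hb => Int.cast_nonneg (mem_filter.1 hb).2.walkPos_nonneg) 2
  rw [positiveSum_intCast_cube hm] at holder
  rw [positiveSum_intCast hm] at holder hP1 ⊢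
  have hsq : (2 ^ (m - 1) / N) ^ 2 ≤ (2 * √m) ^ 2 := by
    rw [mul_pow, Real.sq_sqrt (Nat.cast_nonneg m), div_pow, div_le_iff₀ (by positivity)]
    nlinarith
  exact (pow_le_pow_iff_left₀ (by positivity) (by positivity) two_ne_zero).1 hsq

lemma sum_Icc_eq_walkPos (x : ℕ → ℤ) {j : ℕ} (hj : j ≤ m) :
    ∑ i ∈ Icc 1 j, x i = walkPos (fun k : Fin m => x (k + 1)) j := by
  refine (sum_bij (fun k _ => k.val + 1) (fun k hk => ?_) (fun a _ b _ h => ?_) (fun i hi => ?_)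
    fun _ _ => rfl).symm
  · simp only [mem_filter, mem_univ, true_and] at hk
    simp only [mem_Icc]; omega
  · exact Fin.ext (by omega)
  · simp only [mem_Icc] at hi
    exact ⟨⟨i - 1, by omega⟩, by simp only [mem_filter, mem_univ, true_and]; omega,
      by simp only; omega⟩

section Rademacher

variable {Ω ι : Type*} [MeasurableSpace Ω] {μ : Measure Ω} [IsProbabilityMeasure μ]
  [Fintype ι]

lemma ae_step_decide_eq {Y : Ω → ℤ} (hY : Measurable Y)
    (hdist : μ {ω | Y ω = 1} = 1 / 2 ∧ μ {ω | Y ω = -1} = 1 / 2) :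
    ∀ᵐ ω ∂μ, step (decide (Y ω = 1)) = Y ω := by
  have hdisj : Disjoint {ω | Y ω = 1} {ω | Y ω = -1} :=
    Set.disjoint_left.2 fun ω h1 h2 => by simp_all
  have hmeas : MeasurableSet ({ω | Y ω = 1} ∪ {ω | Y ω = -1}) :=
    (hY (measurableSet_singleton _)).union (hY (measurableSet_singleton _))
  have hunion : μ ({ω | Y ω = 1} ∪ {ω | Y ω = -1}) = 1 := by
    rw [measure_union hdisj (hY (measurableSet_singleton _)), hdist.1, hdist.2,
      ENNReal.add_halves]
  filter_upwards [mem_ae_iff.2 ((prob_compl_eq_zero_iff hmeas).2 hunion)] with ω hω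
  rcases hω with h | h <;> simp_all [step]

lemma measure_forall_decide_eq {Y : ι → Ω → ℤ} (hmeas : ∀ k, Measurable (Y k))
    (hindep : iIndepFun Y μ) (hdist : ∀ k, μ {ω | Y k ω = 1} = 1 / 2) (b : ι → Bool) :
    μ {ω | ∀ k, decide (Y k ω = 1) = b k} = (1 / 2) ^ Fintype.card ι := by
  have hZ : iIndepFun (fun k ω => decide (Y k ω = 1)) μ :=
    hindep.comp (fun _ z => decide (z = 1)) fun _ => measurable_of_countable _
  have hcyl : {ω | ∀ k, decide (Y k ω = 1) = b k} =
      ⋂ k ∈ (univ : Finset ι), (fun ω => decide (Y k ω = 1)) ⁻¹' {b k} := by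
    ext ω; simp
  rw [hcyl, hZ.measure_inter_preimage_eq_mul _ fun _ _ => measurableSet_singleton _,
    ← card_univ, ← prod_const]
  refine prod_congr rfl fun k _ => ?_
  cases b k
  · simp only [Set.preimage, Set.mem_singleton_iff, decide_eq_false_iff_not]
    rw [← Set.compl_ofPred,
      prob_compl_eq_one_sub (s := {ω | Y k ω = 1}) (hmeas k (measurableSet_singleton 1)),
      hdist k, one_div, ENNReal.one_sub_inv_two]
  · simp only [Set.preimage, Set.mem_singleton_iff, decide_eq_true_eq]
    exact hdist k

lemma integral_comp_eq_sum_bool_div [DecidableEq ι] {Y : ι → Ω → ℤ}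
    (hmeas : ∀ k, Measurable (Y k)) (hindep : iIndepFun Y μ)
    (hdist : ∀ k, μ {ω | Y k ω = 1} = 1 / 2 ∧ μ {ω | Y k ω = -1} = 1 / 2)
    (F : (ι → ℤ) → ℝ) :
    ∫ ω, F (fun k => Y k ω) ∂μ =
      (∑ b : ι → Bool, F (step ∘ b)) / 2 ^ Fintype.card ι := by
  set Z : Ω → ι → Bool := fun ω k => decide (Y k ω = 1)
  have hZ : Measurable Z := measurable_pi_lambda _ fun k =>
    (measurable_of_countable fun z : ℤ => decide (z = 1)).comp (hmeas k)
  have hYZ : (fun ω => F fun k => Y k ω) =ᵐ[μ] fun ω => F (step ∘ Z ω) := by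
    filter_upwards [ae_all_iff.2 fun k => ae_step_decide_eq (hmeas k) (hdist k)] with ω hω
    simp only [Z, Function.comp_def, hω]
  rw [integral_congr_ae hYZ, ← integral_map (f := fun b => F (step ∘ b)) hZ.aemeasurable
    (measurable_of_finite _).aestronglyMeasurable,
    integral_fintype (.of_finite), sum_div]
  refine sum_congr rfl fun b _ => ?_
  rw [measureReal_def, Measure.map_apply hZ (measurableSet_singleton b)]
  have hcyl := measure_forall_decide_eq hmeas hindep (fun k => (hdist k).1) b
  simp only [Set.preimage, Set.mem_singleton_iff, funext_iff, Z]
  rw [hcyl, ENNReal.toReal_pow, smul_eq_mul, div_eq_inv_mul, ← inv_pow]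
  norm_num

lemma setIntegral_staysPositive {Y : Fin m → Ω → ℤ} (hmeas : ∀ k, Measurable (Y k))
    (hindep : iIndepFun Y μ)
    (hdist : ∀ k, μ {ω | Y k ω = 1} = 1 / 2 ∧ μ {ω | Y k ω = -1} = 1 / 2)
    (f : ℤ → ℝ) :
    ∫ ω in {ω | StaysPositive fun k => Y k ω}, f (walkPos (fun k => Y k ω) m) ∂μ =
      positiveSum m f / 2 ^ m := by
  have hA : MeasurableSet {ω | StaysPositive fun k => Y k ω} :=
    measurable_pi_lambda _ hmeas (.of_discrete (s := {x | StaysPositive x}))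
  rw [← integral_indicator hA]
  convert integral_comp_eq_sum_bool_div hmeas hindep hdist
    (fun x => if StaysPositive x then f (walkPos x m) else 0) using 1
  · congr 1 with ω
    simp only [Set.indicator_apply, Set.mem_ofPred_eq]
  · rw [Fintype.card_fin, positiveSum, positivePaths, sum_filter]

lemma measureReal_staysPositive {Y : Fin m → Ω → ℤ} (hmeas : ∀ k, Measurable (Y k))
    (hindep : iIndepFun Y μ)
    (hdist : ∀ k, μ {ω | Y k ω = 1} = 1 / 2 ∧ μ {ω | Y k ω = -1} = 1 / 2) :
    μ.real {ω | StaysPositive fun k => Y k ω} = #(positivePaths m) / 2 ^ m := by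
  have h := setIntegral_staysPositive hmeas hindep hdist fun _ => 1
  simpa [positiveSum] using h

end Rademacher

end SimpleRandomWalk

open SimpleRandomWalk

/-- There is `C > 0` such that for all `n ≥ 1`,
`E[S_{n+1} | S_1 > 0, …, S_{n+1} > 0] ≤ C √(n+1)`, where the conditional
expectation given the event is the integral over the event divided by its
probability. -/
theorem conditioned_positive_walk_mean
    {Ω : Type*} [MeasureSpace Ω] [IsProbabilityMeasure (ℙ : Measure Ω)]
    (X : ℕ → Ω → ℤ) (hmeas : ∀ i, Measurable (X i))
    (hindep : iIndepFun X ℙ)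
    (hdist : ∀ i, ℙ {ω | X i ω = 1} = 1/2 ∧ ℙ {ω | X i ω = -1} = 1/2)
    (S : ℕ → Ω → ℤ)
    (hS : ∀ n ω, S n ω = ∑ i ∈ Finset.Icc 1 n, X i ω) :
    ∃ C : ℝ, 0 < C ∧ ∀ n : ℕ, 1 ≤ n →
      (∫ ω in {ω | ∀ i ∈ Finset.Icc 1 (n + 1), 0 < S i ω}, (S (n + 1) ω : ℝ) ∂ℙ) /
          (ℙ {ω | ∀ i ∈ Finset.Icc 1 (n + 1), 0 < S i ω}).toReal
        ≤ C * Real.sqrt (n + 1) := by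
  refine ⟨2, two_pos, fun n _ => ?_⟩
  set Y : Fin (n + 1) → Ω → ℤ := fun k => X (k + 1)
  have hY : iIndepFun Y ℙ := hindep.precomp fun a b h => Fin.ext (Nat.succ_injective h)
  have hwalk : ∀ j ≤ n + 1, ∀ ω, S j ω = walkPos (fun k => Y k ω) j := fun j hj ω => by
    rw [hS, sum_Icc_eq_walkPos _ hj]
  have hevent :
      {ω | ∀ i ∈ Icc 1 (n + 1), 0 < S i ω} = {ω | StaysPositive fun k => Y k ω} := by
    ext ω
    exact forall₂_congr fun j hj => by rw [hwalk j (mem_Icc.1 hj).2]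
  simp_rw [hevent, hwalk (n + 1) le_rfl, ← measureReal_def,
    setIntegral_staysPositive (Y := Y) (fun _ => hmeas _) hY (fun _ => hdist _),
    measureReal_staysPositive (Y := Y) (fun _ => hmeas _) hY (fun _ => hdist _)]
  rw [div_div_div_cancel_right₀ (by positivity)]
  exact_mod_cast positiveSum_intCast_div_card_le (by omega)
end
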